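/- arXiv:2308.06229 — 3 statements merged into one kernel-verified Lean document; each statement's English description precedes it below -/
import Mathlib

section
/- For all integers m, n ≥ 1 with m + n odd, and any real κ > 0, w > 0: ∫₀^{2π} ∫₀^{2π} H₀⁽¹⁾((κw/2π)|s - t|) sin(ns/2) sin(mt/2) ds dt = 0, where H₀⁽¹⁾ is the Hankel function of the first kind of order zero. -/
open Real intervalIntegral

/-- Bessel function of the first kind of order zero, via its power series. -/
noncomputable def besselJ0 (x : ℝ) : ℝ :=
  ∑' k : ℕ, (-1 : ℝ) ^ k * (x / 2) ^ (2 * k) / ((Nat.factorial k : ℝ)) ^ 2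

/-- Bessel function of the second kind of order zero, via its series expansion. -/
noncomputable def besselY0 (x : ℝ) : ℝ :=
  (2 / π) * ((Real.log (x / 2) + Real.eulerMascheroniConstant) * besselJ0 x +
    ∑' k : ℕ, (-1 : ℝ) ^ k * (harmonic (k + 1) : ℝ) * (x ^ 2 / 4) ^ (k + 1) /
      ((Nat.factorial (k + 1) : ℝ)) ^ 2)

/-- Hankel function of the first kind of order zero, `H₀⁽¹⁾ = J₀ + i Y₀`. -/
noncomputable def hankelH0 (x : ℝ) : ℂ :=
  (besselJ0 x : ℂ) + Complex.I * (besselY0 x : ℂ)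

/-!
The kernel depends only on `|s - t|`, which is invariant under the reflection
`(s, t) ↦ (2π - s, 2π - t)`, while `sin (k (2π - x) / 2) = (-1)^(k+1) sin (k x / 2)`.
So the reflection multiplies the integrand by `(-1)^(m+n) = -1`; since it preserves the square
`[0, 2π]²`, the double integral equals its own negative. No integrability is needed: the change of
variables `x ↦ a + b - x` holds for the interval integral unconditionally.
-/

section Reflection

variable {E : Type*} [NormedAddCommGroup E] [NormedSpace ℝ E] {a b : ℝ}

theorem intervalIntegral.integral_comp_add_sub (f : ℝ → E) :
    ∫ x in a..b, f (a + b - x) = ∫ x in a..b, f x := by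
  simp [integral_comp_sub_left]

theorem intervalIntegral.integral_eq_zero_of_comp_add_sub_eq_neg {f : ℝ → E}
    (hf : ∀ x, f (a + b - x) = -f x) : ∫ x in a..b, f x = 0 := by
  have h := integral_comp_add_sub (a := a) (b := b) f
  simp only [hf, integral_neg] at h
  have h2 : (2 : ℝ) • ∫ x in a..b, f x = 0 := by
    rw [two_smul]
    nth_rw 1 [← h]
    exact neg_add_cancel _
  exact (smul_eq_zero.mp h2).resolve_left two_ne_zero

theorem intervalIntegral.integral_integral_eq_zero_of_comp_add_sub_eq_neg {F : ℝ → ℝ → E}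
    (hF : ∀ s t, F (a + b - s) (a + b - t) = -F s t) :
    ∫ t in a..b, ∫ s in a..b, F s t = 0 := by
  refine integral_eq_zero_of_comp_add_sub_eq_neg fun t => ?_
  rw [← integral_comp_add_sub, ← integral_neg]
  simp only [hF]

end Reflection

theorem Real.sin_nat_mul_two_pi_sub_div_two (k : ℕ) (x : ℝ) :
    sin (k * (2 * π - x) / 2) = -((-1) ^ k * sin (k * x / 2)) := by
  rw [← sin_nat_mul_pi_sub]
  ring_nf

theorem kernel_mul_sin_mul_sin_two_pi_sub {m n : ℕ} (hodd : Odd (m + n)) (g : ℝ → ℂ) (s t : ℝ) :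
    g |(2 * π - s) - (2 * π - t)| * (sin (n * (2 * π - s) / 2) : ℂ) *
        (sin (m * (2 * π - t) / 2) : ℂ) =
      -(g |s - t| * (sin (n * s / 2) : ℂ) * (sin (m * t / 2) : ℂ)) := by
  have hsign : (-1 : ℂ) ^ n * (-1) ^ m = -1 := by
    rw [← pow_add, add_comm, hodd.neg_one_pow]
  rw [show (2 * π - s) - (2 * π - t) = -(s - t) by ring, abs_neg,
    sin_nat_mul_two_pi_sub_div_two, sin_nat_mul_two_pi_sub_div_two]
  simp only [Complex.ofReal_neg, Complex.ofReal_mul, Complex.ofReal_pow, Complex.ofReal_one]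
  linear_combination g |s - t| * (sin (n * s / 2) : ℂ) * (sin (m * t / 2) : ℂ) * hsign

theorem stmt_8_general (m n : ℕ) (hodd : Odd (m + n))
    (κ w : ℝ) :
    ∫ t in (0 : ℝ)..(2 * π), ∫ s in (0 : ℝ)..(2 * π),
        hankelH0 ((κ * w / (2 * π)) * |s - t|) *
          (Real.sin (n * s / 2) : ℂ) * (Real.sin (m * t / 2) : ℂ) = 0 := by
  refine integral_integral_eq_zero_of_comp_add_sub_eq_neg fun s t => ?_
  rw [zero_add]
  exact kernel_mul_sin_mul_sin_two_pi_sub hodd (fun r => hankelH0 (κ * w / (2 * π) * r)) s t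

theorem stmt_8 (m n : ℕ) (hm : 1 ≤ m) (hn : 1 ≤ n) (hodd : Odd (m + n))
    (κ w : ℝ) (hκ : 0 < κ) (hw : 0 < w) :
    ∫ t in (0 : ℝ)..(2 * π), ∫ s in (0 : ℝ)..(2 * π),
        hankelH0 ((κ * w / (2 * π)) * |s - t|) *
          (Real.sin (n * s / 2) : ℂ) * (Real.sin (m * t / 2) : ℂ) = 0 :=
  stmt_8_general m n hodd κ w
end

section
/- For all integers m, n ≥ 0 with m + n odd, and any real κ > 0, w > 0: ∫₀^{2π} ∫₀^{2π} H₀⁽¹⁾((κw/2π)|s - t|) cos(ns/2) cos(mt/2) ds dt = 0. -/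
open Real intervalIntegral

/-! The substitution `(s, t) ↦ (2π - s, 2π - t)` preserves the square `[0, 2π]²` and the kernel,
which depends only on `|s - t|`, while `cos (k (2π - x) / 2) = (-1)ᵏ cos (k x / 2)`. So the
integrand changes sign when `m + n` is odd, and the integral equals its own negative.
The change of variables holds for Bochner integrals whether or not the integrand is integrable,
so the logarithmic singularity of `H₀⁽¹⁾` never has to be estimated. -/

section PointReflection

variable {E : Type*} [NormedAddCommGroup E] [NormedSpace ℝ E]

theorem intervalIntegral.integral_integral_comp_sub_left (f : ℝ → ℝ → E) (a b c : ℝ) :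
    ∫ t in a..b, ∫ s in a..b, f (c - s) (c - t) =
      ∫ t in (c - b)..(c - a), ∫ s in (c - b)..(c - a), f s t := by
  have hinner : ∀ t, ∫ s in a..b, f (c - s) t = ∫ s in (c - b)..(c - a), f s t :=
    fun t => integral_comp_sub_left (fun s => f s t) c
  simp only [hinner]
  exact integral_comp_sub_left (fun t => ∫ s in (c - b)..(c - a), f s t) c

theorem intervalIntegral.integral_integral_eq_zero_of_reflect_eq_neg {f : ℝ → ℝ → E} {a b : ℝ}
    (hf : ∀ s t, f (a + b - s) (a + b - t) = -f s t) :
    ∫ t in a..b, ∫ s in a..b, f s t = 0 := by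
  have : IsAddTorsionFree E := .of_isTorsionFree ℝ E
  have hreflect := integral_integral_comp_sub_left f a b (a + b)
  simp only [hf, integral_neg, add_sub_cancel_right, add_sub_cancel_left] at hreflect
  exact neg_eq_self.mp hreflect

end PointReflection

theorem Real.cos_nat_mul_two_pi_sub_div_two (k : ℕ) (x : ℝ) :
    cos (k * (2 * π - x) / 2) = (-1) ^ k * cos (k * x / 2) := by
  rw [show (k : ℝ) * (2 * π - x) / 2 = k * π - k * x / 2 by ring, cos_nat_mul_pi_sub]

theorem stmt_9_general (m n : ℕ) (hodd : Odd (m + n))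
    (κ w : ℝ) :
    ∫ t in (0 : ℝ)..(2 * π), ∫ s in (0 : ℝ)..(2 * π),
        hankelH0 ((κ * w / (2 * π)) * |s - t|) *
          (Real.cos (n * s / 2) : ℂ) * (Real.cos (m * t / 2) : ℂ) = 0 := by
  have hsign : (-1 : ℂ) ^ n * (-1) ^ m = -1 := by
    rw [← pow_add, add_comm]
    exact hodd.neg_one_pow
  apply integral_integral_eq_zero_of_reflect_eq_neg
  intro s t
  rw [zero_add, sub_sub_sub_cancel_left, abs_sub_comm, cos_nat_mul_two_pi_sub_div_two,
    cos_nat_mul_two_pi_sub_div_two]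
  simp only [Complex.ofReal_mul, Complex.ofReal_pow, Complex.ofReal_neg, Complex.ofReal_one]
  linear_combination (hankelH0 (κ * w / (2 * π) * |s - t|) * cos (n * s / 2) *
    cos (m * t / 2)) * hsign

theorem stmt_9 (m n : ℕ) (hodd : Odd (m + n))
    (κ w : ℝ) (hκ : 0 < κ) (hw : 0 < w) :
    ∫ t in (0 : ℝ)..(2 * π), ∫ s in (0 : ℝ)..(2 * π),
        hankelH0 ((κ * w / (2 * π)) * |s - t|) *
          (Real.cos (n * s / 2) : ℂ) * (Real.cos (m * t / 2) : ℂ) = 0 :=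
  stmt_9_general m n hodd κ w
end

section
/- For integers n ≥ 1 and k ≥ 1, the integrals W_k(n) = ∫₀^{2π} sin(ns/2) s^{k+1} ln s ds satisfy the recurrence W_k(n) = A_k(n) - (n/2)² (1/((k+2)(k+3))) W_{k+2}(n), where A_k(n) = (n/2)(1/(k+2))(1/(k+2) + 1/(k+3)) ∫₀^{2π} s^{k+2} cos(ns/2) ds - ((-1)^n n / (2(k+2)(k+3))) (2π)^{k+3} ln(2π). -/
open Real

lemma contPowLog (m : ℕ) : Continuous (fun s : ℝ => s ^ (m + 1) * Real.log s) := by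
  have h : (fun s : ℝ => s ^ (m + 1) * Real.log s) = fun s : ℝ => s ^ m * (s * Real.log s) := by
    funext s; ring
  rw [h]
  exact (continuous_pow m).mul Real.continuous_mul_log

lemma derivPowLog (m : ℕ) {x : ℝ} (hx : x ≠ 0) :
    HasDerivAt (fun s : ℝ => s ^ (m + 1) * Real.log s)
      (((m : ℝ) + 1) * x ^ m * Real.log x + x ^ m) x := by
  have h : HasDerivAt (fun s : ℝ => s ^ (m + 1) * Real.log s) _ x := (hasDerivAt_pow (m + 1) x).mul (Real.hasDerivAt_log hx)
  convert h using 1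
  have : x ^ (m + 1) * x⁻¹ = x ^ m := by
    rw [pow_succ]
    field_simp
  push_cast
  rw [mul_comm (x ^ (m+1)) x⁻¹] at *
  rw [this]

lemma derivSinLin (n : ℕ) (x : ℝ) :
    HasDerivAt (fun s : ℝ => Real.sin ((n : ℝ) * s / 2)) ((n : ℝ) / 2 * Real.cos ((n : ℝ) * x / 2)) x := by
  have h1 : HasDerivAt (fun s : ℝ => (n : ℝ) * s / 2) ((n : ℝ) / 2) x := by
    simpa using ((hasDerivAt_id x).const_mul (n : ℝ)).div_const 2
  have h2 := (Real.hasDerivAt_sin ((n : ℝ) * x / 2)).comp x h1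
  have h3 : HasDerivAt (fun s : ℝ => Real.sin ((n : ℝ) * s / 2)) _ x := h2
  simpa [mul_comm] using h3

lemma derivCosLin (n : ℕ) (x : ℝ) :
    HasDerivAt (fun s : ℝ => Real.cos ((n : ℝ) * s / 2)) (-((n : ℝ) / 2 * Real.sin ((n : ℝ) * x / 2))) x := by
  have h1 : HasDerivAt (fun s : ℝ => (n : ℝ) * s / 2) ((n : ℝ) / 2) x := by
    simpa using ((hasDerivAt_id x).const_mul (n : ℝ)).div_const 2
  have h2 := (Real.hasDerivAt_cos ((n : ℝ) * x / 2)).comp x h1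
  have : HasDerivAt (fun s : ℝ => Real.cos ((n : ℝ) * s / 2)) _ x := h2
  simpa [mul_comm] using this

lemma contSinLin (n : ℕ) : Continuous (fun s : ℝ => Real.sin ((n : ℝ) * s / 2)) :=
  Real.continuous_sin.comp ((continuous_const.mul continuous_id).div_const 2)

lemma contCosLin (n : ℕ) : Continuous (fun s : ℝ => Real.cos ((n : ℝ) * s / 2)) :=
  Real.continuous_cos.comp ((continuous_const.mul continuous_id).div_const 2)

theorem stmt_15 (n k : ℕ) (hn : 1 ≤ n) (hk : 1 ≤ k) (W : ℕ → ℝ)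
    (hW : ∀ j : ℕ, W j = ∫ s in (0 : ℝ)..(2 * π), Real.sin (n * s / 2) * s ^ (j + 1) * Real.log s)
    (A : ℝ)
    (hA : A = ((n : ℝ) / 2) * (1 / ((k : ℝ) + 2)) * (1 / ((k : ℝ) + 2) + 1 / ((k : ℝ) + 3)) *
        (∫ s in (0 : ℝ)..(2 * π), s ^ (k + 2) * Real.cos (n * s / 2)) -
      ((-1 : ℝ) ^ n * (n : ℝ) / (2 * ((k : ℝ) + 2) * ((k : ℝ) + 3))) *
        (2 * π) ^ (k + 3) * Real.log (2 * π)) :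
    W k = A - ((n : ℝ) / 2) ^ 2 * (1 / (((k : ℝ) + 2) * ((k : ℝ) + 3))) * W (k + 2) := by
  have hπ : (0 : ℝ) < π := Real.pi_pos
  set p : ℝ := (k : ℝ) + 2 with hpdef
  set q : ℝ := (k : ℝ) + 3 with hqdef
  have hp : p ≠ 0 := by positivity
  have hq : q ≠ 0 := by positivity
  clear_value p q
  set G : ℝ → ℝ := fun s =>
    Real.sin ((n : ℝ) * s / 2) * (s ^ (k + 2) * Real.log s) / p
    - Real.sin ((n : ℝ) * s / 2) * s ^ (k + 2) / p ^ 2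
    - (n : ℝ) / (2 * (p * q)) * (Real.cos ((n : ℝ) * s / 2) * (s ^ (k + 3) * Real.log s)) with hGdef
  set g : ℝ → ℝ := fun s =>
    Real.sin ((n : ℝ) * s / 2) * s ^ (k + 1) * Real.log s
    + ((n : ℝ) / 2) ^ 2 / (p * q) * (Real.sin ((n : ℝ) * s / 2) * s ^ (k + 2 + 1) * Real.log s)
    - ((n : ℝ) / 2) * (1 / p) * (1 / p + 1 / q) * (s ^ (k + 2) * Real.cos ((n : ℝ) * s / 2)) with hgdef
  -- derivative
  have hderiv : ∀ x ∈ Set.Ioo (0 : ℝ) (2 * π), HasDerivAt G (g x) x := by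
    intro x hx
    have hx0 : x ≠ 0 := ne_of_gt hx.1
    have h1 := derivPowLog (k + 1) hx0
    have h2 := derivPowLog (k + 2) hx0
    have h3 := hasDerivAt_pow (k + 2) x
    have hsin := derivSinLin n x
    have hcos := derivCosLin n x
    have hG : HasDerivAt G _ x := (((hsin.mul h1).div_const p).sub ((hsin.mul h3).div_const (p ^ 2))).sub
      ((hcos.mul h2).const_mul ((n : ℝ) / (2 * (p * q))))
    convert hG using 1
    simp only [hgdef, hpdef, hqdef]
    push_cast
    field_simp
    ring
  -- continuity of G
  have hcont : Continuous G := by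
    refine Continuous.sub (Continuous.sub ?_ ?_) ?_
    · exact ((contSinLin n).mul (contPowLog (k + 1))).div_const p
    · exact ((contSinLin n).mul (continuous_pow (k + 2))).div_const (p ^ 2)
    · exact continuous_const.mul ((contCosLin n).mul (contPowLog (k + 2)))
  -- continuity / integrability of the pieces
  have hct1 : Continuous (fun s : ℝ => Real.sin ((n : ℝ) * s / 2) * s ^ (k + 1) * Real.log s) := by
    have h : (fun s : ℝ => Real.sin ((n : ℝ) * s / 2) * s ^ (k + 1) * Real.log s)
        = fun s : ℝ => Real.sin ((n : ℝ) * s / 2) * (s ^ (k + 1) * Real.log s) := by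
      funext s; ring
    rw [h]; exact (contSinLin n).mul (contPowLog k)
  have hct2 : Continuous (fun s : ℝ => Real.sin ((n : ℝ) * s / 2) * s ^ (k + 2 + 1) * Real.log s) := by
    have h : (fun s : ℝ => Real.sin ((n : ℝ) * s / 2) * s ^ (k + 2 + 1) * Real.log s)
        = fun s : ℝ => Real.sin ((n : ℝ) * s / 2) * (s ^ (k + 2 + 1) * Real.log s) := by
      funext s; ring
    rw [h]; exact (contSinLin n).mul (contPowLog (k + 2))
  have hct3 : Continuous (fun s : ℝ => s ^ (k + 2) * Real.cos ((n : ℝ) * s / 2)) :=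
    (continuous_pow (k + 2)).mul (contCosLin n)
  have hi1 : IntervalIntegrable (fun s : ℝ => Real.sin ((n : ℝ) * s / 2) * s ^ (k + 1) * Real.log s)
      MeasureTheory.volume 0 (2 * π) := hct1.intervalIntegrable 0 (2 * π)
  have hi2 : IntervalIntegrable (fun s : ℝ => Real.sin ((n : ℝ) * s / 2) * s ^ (k + 2 + 1) * Real.log s)
      MeasureTheory.volume 0 (2 * π) := hct2.intervalIntegrable 0 (2 * π)
  have hi3 : IntervalIntegrable (fun s : ℝ => s ^ (k + 2) * Real.cos ((n : ℝ) * s / 2))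
      MeasureTheory.volume 0 (2 * π) := hct3.intervalIntegrable 0 (2 * π)
  have hig : IntervalIntegrable g MeasureTheory.volume 0 (2 * π) := by
    apply IntervalIntegrable.sub
    · exact hi1.add ((hi2.const_mul _))
    · exact hi3.const_mul _
  -- FTC
  have hFTC : (∫ s in (0 : ℝ)..(2 * π), g s) = G (2 * π) - G 0 :=
    intervalIntegral.integral_eq_sub_of_hasDeriv_right_of_le (by positivity)
      hcont.continuousOn (fun x hx => (hderiv x hx).hasDerivWithinAt) hig
  -- boundary values
  have hG0 : G 0 = 0 := by
    simp [hGdef]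
  have hsin2π : Real.sin ((n : ℝ) * (2 * π) / 2) = 0 := by
    have h : (n : ℝ) * (2 * π) / 2 = (n : ℝ) * π := by ring
    rw [h]; exact Real.sin_nat_mul_pi n
  have hcos2π : Real.cos ((n : ℝ) * (2 * π) / 2) = (-1 : ℝ) ^ n := by
    have h : (n : ℝ) * (2 * π) / 2 = (n : ℝ) * π := by ring
    rw [h]
    simpa using Real.cos_nat_mul_pi_sub 0 n
  have hG2π : G (2 * π) =
      -((n : ℝ) / (2 * (p * q)) * ((-1 : ℝ) ^ n * ((2 * π) ^ (k + 3) * Real.log (2 * π)))) := by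
    simp only [hGdef, hsin2π, hcos2π]
    ring
  -- splitting
  have hsplit : (∫ s in (0 : ℝ)..(2 * π), g s)
      = W k + ((n : ℝ) / 2) ^ 2 / (p * q) * W (k + 2)
        - ((n : ℝ) / 2) * (1 / p) * (1 / p + 1 / q) *
          (∫ s in (0 : ℝ)..(2 * π), s ^ (k + 2) * Real.cos ((n : ℝ) * s / 2)) := by
    simp only [hgdef]
    rw [intervalIntegral.integral_sub (hi1.add (hi2.const_mul _)) (hi3.const_mul _),
      intervalIntegral.integral_add hi1 (hi2.const_mul _),
      intervalIntegral.integral_const_mul, intervalIntegral.integral_const_mul,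
      hW k, hW (k + 2)]
  rw [hsplit, hG0, hG2π] at hFTC
  rw [hA]
  linear_combination hFTC
end
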